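/- Let A, A', B be commutative rings, π : A' → A a surjective ring homomorphism, q : B → A a ring homomorphism, and let B' = A' ×_A B = {(a', b) ∈ A' × B : π(a') = q(b)} be the pullback ring. Let P' be a finitely generated projective A'-module, P'' a finitely generated projective B-module, and φ : A ⊗_{A'} P' → A ⊗_B P'' an isomorphism of A-modules. Define P''' = {(x, y) ∈ P' × P'' : φ(1 ⊗ x) = 1 ⊗ y}, a module over B' via the coordinatewise action. Then P''' is a finitely generated projective B'-module, and the natural maps A' ⊗_{B'} P''' → P' and B ⊗_{B'} P''' → P'' (induced by the two coordinate projections) are isomorphisms; moreover the two induced isomorphisms A ⊗_{B'} P''' → A ⊗_{A'} P' and A ⊗_{B'} P''' → A ⊗_B P'' are compatible with φ. -/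

import Mathlib

/-!
Milnor patching. If `χ : A ⊗ V ≅ A ⊗ W` carries `1 ⊗ bᵢ` to `1 ⊗ cᵢ` for bases `b` of `V` and
`c` of `W`, the pairs `(bᵢ, cᵢ)` form a basis of the fibre product, and both projections carry
it to a basis. An arbitrary `χ` between free modules of the same rank is brought to this form by
adding the summand `σ χ⁻¹ σ`, where `σ` is the isomorphism matching the bases: the sum then
differs from `σ ⊕ σ` by an automorphism `diag(α, α⁻¹)`, which is a product of elementary matrices
and therefore lifts along the surjection `A' → A` (Whitehead's lemma). Finally `P'` and `P''`
become free after adding the complements `Q₁ × A'ⁿ` and `Q₂ × Bᵐ`, which are glued by an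
isomorphism built from `φ`, and all the properties pass to direct summands.
-/

set_option synthInstance.maxHeartbeats 1000000
set_option maxHeartbeats 1000000

open TensorProduct

section

variable (A A' B : Type*) [CommRing A] [CommRing A'] [CommRing B]
  [Algebra A' A] [Algebra B A]

/-- The pullback ring `B' = A' ×_A B`, i.e. the subring of `A' × B` consisting
of the pairs `(a', b)` with `π(a') = q(b)`, where `π : A' → A` and `q : B → A`
are the structure maps. -/
def pullbackRing : Subring (A' × B) :=
  RingHom.eqLocus ((algebraMap A' A).comp (RingHom.fst A' B))
    ((algebraMap B A).comp (RingHom.snd A' B))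

instance : Algebra (pullbackRing A A' B) A' :=
  ((RingHom.fst A' B).comp (pullbackRing A A' B).subtype).toAlgebra

instance : Algebra (pullbackRing A A' B) B :=
  ((RingHom.snd A' B).comp (pullbackRing A A' B).subtype).toAlgebra

variable (P' P'' : Type*) [AddCommGroup P'] [Module A' P']
  [AddCommGroup P''] [Module B P'']

/-- `B'` acts on `P'` through the first coordinate projection `B' → A'`. -/
instance : Module (pullbackRing A A' B) P' :=
  Module.compHom P' (algebraMap (pullbackRing A A' B) A')

/-- `B'` acts on `P''` through the second coordinate projection `B' → B`. -/
instance : Module (pullbackRing A A' B) P'' :=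
  Module.compHom P'' (algebraMap (pullbackRing A A' B) B)

instance : IsScalarTower (pullbackRing A A' B) A' P' :=
  IsScalarTower.of_algebraMap_smul fun _ _ => rfl

instance : IsScalarTower (pullbackRing A A' B) B P'' :=
  IsScalarTower.of_algebraMap_smul fun _ _ => rfl

theorem one_tmul_smul_left (a' : A') (x : P') :
    (1 : A) ⊗ₜ[A'] (a' • x) = (algebraMap A' A a') • ((1 : A) ⊗ₜ[A'] x) := by
  rw [← smul_tmul, ← algebraMap_smul A a' (1 : A), smul_tmul']

theorem one_tmul_smul_right (b : B) (y : P'') :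
    (1 : A) ⊗ₜ[B] (b • y) = (algebraMap B A b) • ((1 : A) ⊗ₜ[B] y) := by
  rw [← smul_tmul, ← algebraMap_smul A b (1 : A), smul_tmul']

variable (φ : (A ⊗[A'] P') ≃ₗ[A] (A ⊗[B] P''))

/-- The fibre product `P''' = {(x, y) ∈ P' × P'' | φ(1 ⊗ x) = 1 ⊗ y}`, as a
`B'`-submodule of `P' × P''` with the coordinatewise action
`(a', b) • (x, y) = (a' • x, b • y)`. -/
def pullbackModule : Submodule (pullbackRing A A' B) (P' × P'') where
  carrier := {p | φ ((1 : A) ⊗ₜ[A'] p.1) = (1 : A) ⊗ₜ[B] p.2}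
  add_mem' := by
    intro p q hp hq
    simp only [Set.mem_setOf_eq] at *
    rw [Prod.fst_add, Prod.snd_add, TensorProduct.tmul_add, map_add, hp, hq,
      TensorProduct.tmul_add]
  zero_mem' := by simp
  smul_mem' := by
    intro c p hp
    simp only [Set.mem_setOf_eq] at *
    have hc : algebraMap A' A (c : A' × B).1 = algebraMap B A (c : A' × B).2 := c.2
    show φ ((1 : A) ⊗ₜ[A'] ((c : A' × B).1 • p.1)) = (1 : A) ⊗ₜ[B] ((c : A' × B).2 • p.2)
    rw [one_tmul_smul_left, map_smul, hp, hc, ← one_tmul_smul_right]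

/-- The natural `A'`-linear map `A' ⊗[B'] P''' → P'`, `a' ⊗ (x, y) ↦ a' • x`,
induced by the first coordinate projection. -/
noncomputable def toLeft :
    (A' ⊗[pullbackRing A A' B] (pullbackModule A A' B P' P'' φ)) →ₗ[A'] P' :=
  LinearMap.liftBaseChange A'
    ((LinearMap.fst (pullbackRing A A' B) P' P'').comp
      (pullbackModule A A' B P' P'' φ).subtype)

/-- The natural `B`-linear map `B ⊗[B'] P''' → P''`, `b ⊗ (x, y) ↦ b • y`,
induced by the second coordinate projection. -/
noncomputable def toRight :
    (B ⊗[pullbackRing A A' B] (pullbackModule A A' B P' P'' φ)) →ₗ[B] P'' :=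
  LinearMap.liftBaseChange B
    ((LinearMap.snd (pullbackRing A A' B) P' P'').comp
      (pullbackModule A A' B P' P'' φ).subtype)

section LiftBaseChange

variable {R S M M' N : Type*} [CommRing R] [CommRing S] [Algebra R S]
  [AddCommGroup M] [Module R M] [AddCommGroup M'] [Module R M']
  [AddCommGroup N] [Module R N] [Module S N] [IsScalarTower R S N]

theorem LinearMap.bijective_liftBaseChange_comp_linearEquiv_iff (f : M' →ₗ[R] N)
    (e : M ≃ₗ[R] M') :
    Function.Bijective ((f ∘ₗ e.toLinearMap).liftBaseChange S) ↔
      Function.Bijective (f.liftBaseChange S) := by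
  have hcomp : (f ∘ₗ e.toLinearMap).liftBaseChange S =
      f.liftBaseChange S ∘ₗ (e.baseChange R S M M').toLinearMap := by
    ext x
    simp
  rw [hcomp, LinearMap.coe_comp, LinearEquiv.coe_coe,
    (e.baseChange R S M M').bijective.of_comp_iff]

theorem LinearMap.bijective_liftBaseChange_prodMap_iff {M₂ N₂ : Type*} [AddCommGroup M₂]
    [Module R M₂] [AddCommGroup N₂] [Module R N₂] [Module S N₂] [IsScalarTower R S N₂]
    (f : M →ₗ[R] N) (f₂ : M₂ →ₗ[R] N₂) :
    Function.Bijective ((f.prodMap f₂).liftBaseChange S) ↔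
      Function.Bijective (f.liftBaseChange S) ∧ Function.Bijective (f₂.liftBaseChange S) := by
  have hcomp : (f.prodMap f₂).liftBaseChange S =
      (f.liftBaseChange S).prodMap (f₂.liftBaseChange S) ∘ₗ
        (TensorProduct.prodRight R S S M M₂).toLinearMap := by
    ext x <;> simp
  rw [hcomp, LinearMap.coe_comp, LinearEquiv.coe_coe,
    (TensorProduct.prodRight R S S M M₂).bijective.of_comp_iff, LinearMap.coe_prodMap,
    Prod.map_bijective]

theorem LinearMap.bijective_liftBaseChange_of_basis {ι : Type*} (b : Module.Basis ι R M)
    (c : Module.Basis ι S N) {f : M →ₗ[R] N} (h : ∀ i, f (b i) = c i) :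
    Function.Bijective (f.liftBaseChange S) := by
  have : f.liftBaseChange S = ((b.baseChange S).equiv c (Equiv.refl ι)).toLinearMap :=
    (b.baseChange S).ext fun i => by
      rw [LinearEquiv.coe_coe, Module.Basis.equiv_apply, Module.Basis.baseChange_apply,
        liftBaseChange_one_tmul, h, Equiv.refl_apply]
  rw [this]
  exact LinearEquiv.bijective _

end LiftBaseChange

section SurjectiveBaseChange

variable {R S M : Type*} [CommRing R] [CommRing S] [Algebra R S] [AddCommGroup M] [Module R M]
  [Module.Projective R M]

theorem LinearMap.exists_one_tmul_eq_of_surjective {N : Type*} [AddCommGroup N] [Module R N]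
    (hsurj : Function.Surjective (algebraMap R S)) (g : S ⊗[R] M →ₗ[S] S ⊗[R] N) :
    ∃ G : M →ₗ[R] N, ∀ x, (1 : S) ⊗ₜ G x = g (1 ⊗ₜ x) := by
  obtain ⟨G, hG⟩ := Module.projective_lifting_property (TensorProduct.mk R S N 1)
    (g.restrictScalars R ∘ₗ TensorProduct.mk R S M 1) (TensorProduct.mk_surjective R N S hsurj)
  exact ⟨G, fun x => congr($hG x)⟩

/-- Whitehead's lemma: `diag(α, α⁻¹)` is a product of elementary matrices, each of which lifts
along the surjection `R → S`, although `α` itself need not. -/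
theorem LinearEquiv.exists_prod_lift_of_surjective (hsurj : Function.Surjective (algebraMap R S))
    (α : S ⊗[R] M ≃ₗ[S] S ⊗[R] M) :
    ∃ L : (M × M) ≃ₗ[R] (M × M), ∀ p : M × M,
      (1 : S) ⊗ₜ (L p).1 = α (1 ⊗ₜ p.1) ∧ (1 : S) ⊗ₜ (L p).2 = α.symm (1 ⊗ₜ p.2) := by
  obtain ⟨G₁, hG₁⟩ := LinearMap.exists_one_tmul_eq_of_surjective hsurj α.toLinearMap
  obtain ⟨G₂, hG₂⟩ := LinearMap.exists_one_tmul_eq_of_surjective hsurj α.symm.toLinearMap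
  let down (f : M →ₗ[R] M) : (M × M) ≃ₗ[R] (M × M) :=
    (LinearEquiv.refl R M).skewProd (LinearEquiv.refl R M) f
  let up (f : M →ₗ[R] M) : (M × M) ≃ₗ[R] (M × M) :=
    LinearEquiv.prodComm R M M ≪≫ₗ down f ≪≫ₗ LinearEquiv.prodComm R M M
  let rot : (M × M) ≃ₗ[R] (M × M) :=
    LinearEquiv.prodComm R M M ≪≫ₗ (LinearEquiv.neg R).prodCongr (LinearEquiv.refl R M)
  refine ⟨rot ≪≫ₗ up G₁ ≪≫ₗ down (-G₂) ≪≫ₗ up G₁, fun ⟨x, y⟩ => ?_⟩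
  simp only [rot, up, down, LinearEquiv.trans_apply, LinearEquiv.prodComm_apply,
    LinearEquiv.prodCongr_apply, LinearEquiv.skewProd_apply, LinearEquiv.refl_apply,
    LinearEquiv.coe_neg, Prod.fst_swap, Prod.snd_swap, LinearMap.neg_apply, tmul_add, tmul_neg,
    hG₁, hG₂, LinearEquiv.coe_coe, map_add, map_neg, Pi.neg_apply, id_eq,
    LinearEquiv.apply_symm_apply, LinearEquiv.symm_apply_apply]
  constructor <;> abel

end SurjectiveBaseChange

theorem Module.Projective.exists_prod_linearEquiv_pi (R P : Type*) [CommRing R] [AddCommGroup P]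
    [Module R P] [Module.Finite R P] [Module.Projective R P] :
    ∃ (n : ℕ) (Q : Submodule R (Fin n → R)), Nonempty ((P × Q) ≃ₗ[R] (Fin n → R)) := by
  obtain ⟨n, f, hf⟩ := Module.Finite.exists_fin' R P
  obtain ⟨s, hs⟩ := f.exists_rightInverse_of_surjective (LinearMap.range_eq_top.mpr hf)
  exact ⟨n, LinearMap.ker f, ⟨LinearEquiv.prodComm R _ _ ≪≫ₗ
    (((LinearMap.exact_subtype_ker_map f).splitSurjectiveEquiv
      (LinearMap.ker f).injective_subtype ⟨s, hs⟩).1).symm⟩⟩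

noncomputable def Module.Basis.ofProdLinearEquivPi {R P Q : Type*} [CommRing R] [AddCommGroup P]
    [Module R P] [AddCommGroup Q] [Module R Q] {m : ℕ} (e : (P × Q) ≃ₗ[R] (Fin m → R)) (n : ℕ) :
    Module.Basis (Fin m ⊕ Fin n) R (P × (Q × (Fin n → R))) :=
  ((Pi.basisFun R (Fin m)).prod (Pi.basisFun R (Fin n))).map
    ((LinearEquiv.prodAssoc R P Q (Fin n → R)).symm ≪≫ₗ
      e.prodCongr (LinearEquiv.refl R (Fin n → R))).symm

section Gluing

variable {A A' B}
variable {V W : Type*} [AddCommGroup V] [Module A' V] [AddCommGroup W] [Module B W]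

theorem mem_pullbackModule_iff {χ : A ⊗[A'] V ≃ₗ[A] A ⊗[B] W} {p : V × W} :
    p ∈ pullbackModule A A' B V W χ ↔ χ (1 ⊗ₜ p.1) = 1 ⊗ₜ p.2 :=
  Iff.rfl

def IsGoodGluing (χ : A ⊗[A'] V ≃ₗ[A] A ⊗[B] W) : Prop :=
  Module.Finite (pullbackRing A A' B) (pullbackModule A A' B V W χ) ∧
    Module.Projective (pullbackRing A A' B) (pullbackModule A A' B V W χ) ∧
    Function.Bijective (toLeft A A' B V W χ) ∧ Function.Bijective (toRight A A' B V W χ)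

section Basis

variable {ι : Type*} [Fintype ι] (b₁ : Module.Basis ι A' V)
  (b₂ : Module.Basis ι B W) {χ : A ⊗[A'] V ≃ₗ[A] A ⊗[B] W}

theorem mem_pullbackModule_iff_of_basis (h : ∀ i, χ (1 ⊗ₜ b₁ i) = 1 ⊗ₜ b₂ i) (p : V × W) :
    p ∈ pullbackModule A A' B V W χ ↔
      ∀ i, algebraMap A' A (b₁.equivFun p.1 i) = algebraMap B A (b₂.equivFun p.2 i) := by
  have hrepr : χ ≪≫ₗ (b₂.baseChange A).repr = (b₁.baseChange A).repr :=
    (b₁.baseChange A).ext' fun i => by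
      rw [LinearEquiv.trans_apply, Module.Basis.baseChange_apply, h,
        ← Module.Basis.baseChange_apply, ← Module.Basis.baseChange_apply, Module.Basis.repr_self,
        Module.Basis.repr_self]
  rw [mem_pullbackModule_iff, ← (b₂.baseChange A).repr.injective.eq_iff,
    ← LinearEquiv.trans_apply, hrepr, Finsupp.ext_iff]
  simp [Module.Basis.baseChange_repr_tmul, Algebra.algebraMap_eq_smul_one]

noncomputable def pullbackModuleEquivPi (h : ∀ i, χ (1 ⊗ₜ b₁ i) = 1 ⊗ₜ b₂ i) :
    pullbackModule A A' B V W χ ≃ₗ[pullbackRing A A' B] (ι → pullbackRing A A' B) where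
  toFun p i := ⟨(b₁.equivFun p.1.1 i, b₂.equivFun p.1.2 i),
    (mem_pullbackModule_iff_of_basis b₁ b₂ h p).mp p.2 i⟩
  invFun z := ⟨(b₁.equivFun.symm fun i => (z i : A' × B).1,
      b₂.equivFun.symm fun i => (z i : A' × B).2),
    (mem_pullbackModule_iff_of_basis b₁ b₂ h _).mpr fun i => by
      simp only [LinearEquiv.apply_symm_apply]
      exact (z i).2⟩
  map_add' p q := by ext <;> simp
  map_smul' c p := by
    ext i
    · exact congr($(b₁.equivFun.map_smul (c : A' × B).1 (p : V × W).1) i)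
    · exact congr($(b₂.equivFun.map_smul (c : A' × B).2 (p : V × W).2) i)
  left_inv p := by ext <;> simp
  right_inv z := by ext <;> simp only [LinearEquiv.apply_symm_apply]

theorem IsGoodGluing.of_basis [DecidableEq ι] (h : ∀ i, χ (1 ⊗ₜ b₁ i) = 1 ⊗ₜ b₂ i) :
    IsGoodGluing χ := by
  let c := (Pi.basisFun (pullbackRing A A' B) ι).map (pullbackModuleEquivPi b₁ b₂ h).symm
  have hc : ∀ i, (c i : V × W) = (b₁ i, b₂ i) := by
    intro i
    simp [c, pullbackModuleEquivPi, Pi.single_apply, apply_ite]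
  exact ⟨Module.Finite.of_basis c, Module.Projective.of_basis c,
    LinearMap.bijective_liftBaseChange_of_basis c b₁ fun i => congr_arg Prod.fst (hc i),
    LinearMap.bijective_liftBaseChange_of_basis c b₂ fun i => congr_arg Prod.snd (hc i)⟩

end Basis

section Prod

variable {V₂ W₂ : Type*} [AddCommGroup V₂] [Module A' V₂] [AddCommGroup W₂] [Module B W₂]
variable (χ : A ⊗[A'] V ≃ₗ[A] A ⊗[B] W) (χ₂ : A ⊗[A'] V₂ ≃ₗ[A] A ⊗[B] W₂)

noncomputable def glueProd : A ⊗[A'] (V × V₂) ≃ₗ[A] A ⊗[B] (W × W₂) :=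
  prodRight A' A A V V₂ ≪≫ₗ χ.prodCongr χ₂ ≪≫ₗ (prodRight B A A W W₂).symm

theorem glueProd_one_tmul (v : V × V₂) :
    glueProd χ χ₂ (1 ⊗ₜ v) = (prodRight B A A W W₂).symm (χ (1 ⊗ₜ v.1), χ₂ (1 ⊗ₜ v.2)) :=
  rfl

theorem mem_pullbackModule_glueProd_iff {p : (V × V₂) × (W × W₂)} :
    p ∈ pullbackModule A A' B _ _ (glueProd χ χ₂) ↔
      (p.1.1, p.2.1) ∈ pullbackModule A A' B V W χ ∧
        (p.1.2, p.2.2) ∈ pullbackModule A A' B V₂ W₂ χ₂ := by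
  rw [mem_pullbackModule_iff, glueProd_one_tmul, LinearEquiv.symm_apply_eq, prodRight_tmul,
    Prod.ext_iff]
  rfl

noncomputable def pullbackModuleGlueProdEquiv :
    pullbackModule A A' B _ _ (glueProd χ χ₂) ≃ₗ[pullbackRing A A' B]
      pullbackModule A A' B V W χ × pullbackModule A A' B V₂ W₂ χ₂ where
  toFun p := (⟨(p.1.1.1, p.1.2.1), ((mem_pullbackModule_glueProd_iff χ χ₂).mp p.2).1⟩,
    ⟨(p.1.1.2, p.1.2.2), ((mem_pullbackModule_glueProd_iff χ χ₂).mp p.2).2⟩)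
  invFun q := ⟨((q.1.1.1, q.2.1.1), (q.1.1.2, q.2.1.2)),
    (mem_pullbackModule_glueProd_iff χ χ₂).mpr ⟨q.1.2, q.2.2⟩⟩
  map_add' _ _ := rfl
  map_smul' _ _ := rfl
  left_inv _ := rfl
  right_inv _ := rfl

variable {χ χ₂}

theorem IsGoodGluing.of_glueProd (h : IsGoodGluing (glueProd χ χ₂)) : IsGoodGluing χ := by
  obtain ⟨hfin, hproj, hleft, hright⟩ := h
  let E := pullbackModuleGlueProdEquiv χ χ₂
  refine ⟨Module.Finite.of_surjective (LinearMap.fst _ _ _ ∘ₗ E.toLinearMap)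
      (Prod.fst_surjective.comp E.surjective),
    Module.Projective.of_split (E.symm.toLinearMap ∘ₗ LinearMap.inl _ _ _)
      (LinearMap.fst _ _ _ ∘ₗ E.toLinearMap) (LinearMap.ext fun _ => by simp), ?_, ?_⟩
  · have hE : Function.Bijective
        (((LinearMap.fst _ _ _ ∘ₗ Submodule.subtype _).prodMap
          (LinearMap.fst _ _ _ ∘ₗ Submodule.subtype _) ∘ₗ E.toLinearMap).liftBaseChange A') :=
      hleft
    rw [LinearMap.bijective_liftBaseChange_comp_linearEquiv_iff,
      LinearMap.bijective_liftBaseChange_prodMap_iff] at hE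
    exact hE.1
  · have hE : Function.Bijective
        (((LinearMap.snd _ _ _ ∘ₗ Submodule.subtype _).prodMap
          (LinearMap.snd _ _ _ ∘ₗ Submodule.subtype _) ∘ₗ E.toLinearMap).liftBaseChange B) :=
      hright
    rw [LinearMap.bijective_liftBaseChange_comp_linearEquiv_iff,
      LinearMap.bijective_liftBaseChange_prodMap_iff] at hE
    exact hE.1

end Prod

theorem IsGoodGluing.of_basis_of_surjective (hsurj : Function.Surjective (algebraMap A' A))
    {ι : Type*} [Fintype ι] [DecidableEq ι] (b₁ : Module.Basis ι A' V) (b₂ : Module.Basis ι B W)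
    (χ : A ⊗[A'] V ≃ₗ[A] A ⊗[B] W) : IsGoodGluing χ := by
  let σ := (b₁.baseChange A).equiv (b₂.baseChange A) (Equiv.refl ι)
  have hσ : ∀ i, σ (1 ⊗ₜ b₁ i) = 1 ⊗ₜ b₂ i := fun i => by
    simp only [σ, ← Module.Basis.baseChange_apply, Module.Basis.equiv_apply, Equiv.refl_apply]
  have := Module.Projective.of_basis b₁
  obtain ⟨L, hL⟩ := LinearEquiv.exists_prod_lift_of_surjective hsurj (χ ≪≫ₗ σ.symm).symm
  -- `glueProd χ (σ χ⁻¹ σ)` composed with the base change of `L` is `glueProd σ σ`.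
  refine (IsGoodGluing.of_basis ((b₁.prod b₁).map L) (b₂.prod b₂)
    (χ := glueProd χ (σ ≪≫ₗ χ.symm ≪≫ₗ σ)) fun k => ?_).of_glueProd
  rw [Module.Basis.map_apply, glueProd_one_tmul, (hL _).1, (hL _).2, LinearEquiv.symm_apply_eq,
    prodRight_tmul]
  cases k <;> simp [hσ]

/-- `A ⊗ Q₁ × Aⁿ ≅ A ⊗ Q₁ × A ⊗ W × A ⊗ Q₂ ≅ A ⊗ Q₁ × A ⊗ V × A ⊗ Q₂ ≅ Aᵐ × A ⊗ Q₂`. -/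
noncomputable def complementGluing (χ : A ⊗[A'] V ≃ₗ[A] A ⊗[B] W) {Q₁ Q₂ : Type*}
    [AddCommGroup Q₁] [Module A' Q₁] [AddCommGroup Q₂] [Module B Q₂] {m n : ℕ}
    (e₁ : (V × Q₁) ≃ₗ[A'] (Fin m → A')) (e₂ : (W × Q₂) ≃ₗ[B] (Fin n → B)) :
    A ⊗[A'] (Q₁ × (Fin n → A')) ≃ₗ[A] A ⊗[B] (Q₂ × (Fin m → B)) :=
  let std (k : ℕ) : A ⊗[A'] (Fin k → A') ≃ₗ[A] A ⊗[B] (Fin k → B) :=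
    piScalarRight A' A A (Fin k) ≪≫ₗ (piScalarRight B A A (Fin k)).symm
  prodRight A' A A Q₁ (Fin n → A') ≪≫ₗ
    (LinearEquiv.refl A _).prodCongr
      (std n ≪≫ₗ (e₂.baseChange B A _ _).symm ≪≫ₗ prodRight B A A W Q₂) ≪≫ₗ
    (LinearEquiv.prodAssoc A _ _ _).symm ≪≫ₗ
    (LinearEquiv.prodComm A _ _ ≪≫ₗ χ.symm.prodCongr (LinearEquiv.refl A _) ≪≫ₗ
      (prodRight A' A A V Q₁).symm ≪≫ₗ e₁.baseChange A' A _ _ ≪≫ₗ std m).prodCongr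
      (LinearEquiv.refl A _) ≪≫ₗ
    LinearEquiv.prodComm A _ _ ≪≫ₗ (prodRight B A A Q₂ (Fin m → B)).symm

end Gluing

/-- if `A' → A` is surjective, `P'` is finitely generated
projective over `A'` and `P''` is finitely generated projective over `B`, then
the fibre product `P'''` is finitely generated projective over
`B' = A' ×_A B`, the natural maps `A' ⊗[B'] P''' → P'` and `B ⊗[B'] P''' → P''`
(induced by the coordinate projections) are isomorphisms, and the two induced
identifications of `A ⊗[B'] P'''` with `A ⊗[A'] P'` and with `A ⊗[B] P''`
(given on generators by `a ⊗ p ↦ a ⊗ p.1` and `a ⊗ p ↦ a ⊗ p.2`) are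
compatible with `φ`. -/
theorem pullbackModule_finite_projective_baseChange
    (hsurj : Function.Surjective (algebraMap A' A))
    [Module.Finite A' P'] [Module.Projective A' P']
    [Module.Finite B P''] [Module.Projective B P''] :
    Module.Finite (pullbackRing A A' B) (pullbackModule A A' B P' P'' φ) ∧
    Module.Projective (pullbackRing A A' B) (pullbackModule A A' B P' P'' φ) ∧
    Function.Bijective (toLeft A A' B P' P'' φ) ∧
    Function.Bijective (toRight A A' B P' P'' φ) ∧
    (∀ (a : A) (p : pullbackModule A A' B P' P'' φ),
      φ (a ⊗ₜ[A'] ((p : P' × P'').1)) = a ⊗ₜ[B] ((p : P' × P'').2)) := by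
  obtain ⟨m, Q₁, ⟨e₁⟩⟩ := Module.Projective.exists_prod_linearEquiv_pi A' P'
  obtain ⟨n, Q₂, ⟨e₂⟩⟩ := Module.Projective.exists_prod_linearEquiv_pi B P''
  obtain ⟨hfin, hproj, hleft, hright⟩ : IsGoodGluing φ :=
    (IsGoodGluing.of_basis_of_surjective hsurj (.ofProdLinearEquivPi e₁ n)
      ((Module.Basis.ofProdLinearEquivPi e₂ m).reindex (Equiv.sumComm _ _))
      (glueProd φ (complementGluing φ e₁ e₂))).of_glueProd
  refine ⟨hfin, hproj, hleft, hright, fun a p => ?_⟩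
  rw [tmul_eq_smul_one_tmul a, map_smul, p.2, ← tmul_eq_smul_one_tmul]

end
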